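/- arXiv:2004.12354 — 3 statements merged into one kernel-verified Lean document; each statement's English description precedes it below -/
import Mathlib

section
/- Let K be a commutative ring, ι an index set, and G a finitely generated subgroup of FL_ι(K). Then G contains a normal abelian subgroup L such that G/L is isomorphic to a subgroup of the automorphism group of a finitely generated module over a Noetherian commutative subring of K; that is, there exist a subring K₁ ⊆ K which is a Noetherian ring, a finitely generated K₁-module M, and an injective group homomorphism from G/L into the group of K₁-linear automorphisms of M. -/
/-- `s ⊆ ι` is a support of the `K`-linear automorphism `g` of the free module `ι →₀ K`:
`g` fixes the standard basis vectors `e j` for `j ∉ s` and maps `e j`, for `j ∈ s`, into the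
`K`-span of `{e i : i ∈ s}`. -/
def IsSupport {K ι : Type*} [Ring K] (g : (ι →₀ K) ≃ₗ[K] (ι →₀ K)) (s : Set ι) : Prop :=
  (∀ j ∉ s, g (Finsupp.single j 1) = Finsupp.single j 1) ∧
  (∀ j ∈ s, g (Finsupp.single j 1) ∈
    Submodule.span K ((fun i => Finsupp.single i (1 : K)) '' s))

/-- A `K`-linear automorphism of `ι →₀ K` is finitary if it has a finite support. -/
def IsFinitary {K ι : Type*} [Ring K] (g : (ι →₀ K) ≃ₗ[K] (ι →₀ K)) : Prop :=
  ∃ s : Set ι, s.Finite ∧ IsSupport g s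

/-- Conjugating automorphisms by a linear equivalence, as a group isomorphism. -/
def conjAut {R M N : Type*} [CommRing R] [AddCommGroup M] [AddCommGroup N]
    [Module R M] [Module R N] (q : M ≃ₗ[R] N) : (M ≃ₗ[R] M) ≃* (N ≃ₗ[R] N) where
  toFun f := q.symm.trans (f.trans q)
  invFun f := q.trans (f.trans q.symm)
  left_inv f := by ext x; simp
  right_inv f := by ext x; simp
  map_mul' f g := by
    ext x
    show q ((f * g) (q.symm x)) = q (f (q.symm (q (g (q.symm x)))))
    simp


set_option maxHeartbeats 2000000 in
set_option synthInstance.maxHeartbeats 400000 in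
/-- Let `K` be a commutative ring and `G` a finitely generated subgroup of `FL_ι(K)`. Then `G`
has a normal abelian subgroup `L` such that `G / L` embeds into the automorphism group of a
finitely generated module over a Noetherian commutative subring `K₁` of `K` (every finitely
generated `K₁`-module is a quotient of some `Fin n → K₁` by a submodule `S`). -/
theorem fg_subgroup_of_FL_has_normal_abelian_with_quotient_in_aut_of_fg_module
    {K ι : Type*} [CommRing K]
    (G : Subgroup ((ι →₀ K) ≃ₗ[K] (ι →₀ K)))
    (hfin : ∀ g ∈ G, IsFinitary g)
    (hfg : Group.FG ↥G) :
    ∃ L : Subgroup ↥G, ∃ hL : L.Normal, IsMulCommutative ↥L ∧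
      (letI := hL;
      ∃ K₁ : Subring K, IsNoetherianRing ↥K₁ ∧
        ∃ (n : ℕ) (S : Submodule ↥K₁ (Fin n → ↥K₁))
          (φ : (↥G ⧸ L) →* (((Fin n → ↥K₁) ⧸ S) ≃ₗ[↥K₁] ((Fin n → ↥K₁) ⧸ S))),
          Function.Injective φ) := by
  classical
  set Amb := (ι →₀ K) ≃ₗ[K] (ι →₀ K) with hAmb
  set e : ι → (ι →₀ K) := fun i => Finsupp.single i 1 with he
  have hmulapp : ∀ (a b : Amb) (x : ι →₀ K), (a * b) x = a (b x) := fun _ _ _ => rfl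
  -- finite generating set in the ambient group
  obtain ⟨T, hT⟩ : ∃ T : Finset ↥G, Subgroup.closure (T : Set ↥G) = ⊤ := hfg.out
  set S0 : Set Amb := (G.subtype '' ↑T) ∪ (G.subtype '' ↑T)⁻¹ with hS0
  have hS0fin : S0.Finite := ((T.finite_toSet.image _)).union ((T.finite_toSet.image _).inv)
  have hS0G : ∀ g ∈ S0, g ∈ G := by
    rintro g (⟨x, hx, rfl⟩ | hg)
    · exact x.2
    · rw [Set.mem_inv] at hg
      obtain ⟨x, hx, hxe⟩ := hg
      have : g = (G.subtype x)⁻¹ := by rw [hxe, inv_inv]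
      exact this ▸ G.inv_mem x.2
  have hGsub : ∀ g ∈ G, g ∈ Submonoid.closure S0 := by
    intro g hg
    have h1 : Subgroup.closure (G.subtype '' ↑T) = G := by
      rw [← MonoidHom.map_closure, hT, ← MonoidHom.range_eq_map, Subgroup.range_subtype]
    have h2 : g ∈ (Subgroup.closure (G.subtype '' ↑T)).toSubmonoid := by
      rw [h1]; exact hg
    rw [Subgroup.closure_toSubmonoid] at h2
    exact h2
  -- common finite support
  choose! sup hsupfin hsupp using fun g (hg : g ∈ S0) => hfin g (hS0G g hg)
  set s : Set ι := ⋃ g ∈ S0, sup g with hs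
  have hsfin : s.Finite := hS0fin.biUnion fun g hg => hsupfin g hg
  have hsups : ∀ g ∈ S0, IsSupport g s := by
    intro g hg
    have hsub : sup g ⊆ s := Set.subset_biUnion_of_mem hg
    obtain ⟨h1, h2⟩ := hsupp g hg
    constructor
    · exact fun j hj => h1 j fun h => hj (hsub h)
    · intro j hj
      by_cases hj' : j ∈ sup g
      · exact Submodule.span_mono (Set.image_mono hsub) (h2 j hj')
      · rw [h1 j hj']
        exact Submodule.subset_span ⟨j, hj, rfl⟩
  set t : Finset ι := hsfin.toFinset with ht
  have hts : ∀ i, i ∈ t ↔ i ∈ s := fun i => hsfin.mem_toFinset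
  -- the subring of entries
  set E : Set K := (fun p : Amb × ι × ι => (p.1 (e p.2.2)) p.2.1) '' (S0 ×ˢ s ×ˢ s) with hE
  have hEfin : E.Finite := (hS0fin.prod (hsfin.prod hsfin)).image _
  set K₁ : Subring K := Subring.closure E with hK₁
  have hNoeth : IsNoetherianRing ↥K₁ := is_noetherian_subring_closure E hEfin
  -- coordinates vanish off s for members of the span
  have hspan0 : ∀ v : ι →₀ K,
      v ∈ Submodule.span K ((fun i => Finsupp.single i (1 : K)) '' s) → ∀ i ∉ s, v i = 0 := by
    intro v hv i hi
    rw [← Finsupp.supported_eq_span_single, Finsupp.mem_supported] at hv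
    by_contra h
    exact hi (hv (Finsupp.mem_support_iff.2 h))
  -- expansion lemma
  have hexp : ∀ v : ι →₀ K, (∀ i ∉ s, v i = 0) → v = ∑ i ∈ t, v i • e i := by
    intro v hv
    have hsubset : v.support ⊆ t := by
      intro i hi
      refine (hts i).2 ?_
      by_contra h
      exact Finsupp.mem_support_iff.1 hi (hv i h)
    calc v = v.sum Finsupp.single := (Finsupp.sum_single v).symm
      _ = ∑ i ∈ v.support, Finsupp.single i (v i) := rfl
      _ = ∑ i ∈ t, Finsupp.single i (v i) := Finset.sum_subset hsubset
          (fun i _ h => by rw [Finsupp.notMem_support_iff.1 h, Finsupp.single_zero])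
      _ = ∑ i ∈ t, v i • e i := Finset.sum_congr rfl fun i _ =>
          (Finsupp.smul_single_one i (v i)).symm
  have happ : ∀ (g : Amb) (v : ι →₀ K), (∀ i ∉ s, v i = 0) →
      ∀ k, (g v) k = ∑ i ∈ t, v i * (g (e i)) k := by
    intro g v hv k
    conv_lhs => rw [hexp v hv]
    rw [map_sum, Finset.sum_apply']
    exact Finset.sum_congr rfl fun i _ => by rw [map_smul, Finsupp.smul_apply, smul_eq_mul]
  -- the key invariance property
  have hkey : ∀ g ∈ G, ∀ j, (j ∉ s → g (e j) = e j) ∧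
      (j ∈ s → ∀ i, ((i ∉ s → g (e j) i = 0) ∧ g (e j) i ∈ K₁)) := by
    intro g hg
    refine Submonoid.closure_induction ?_ ?_ ?_ (hGsub g hg)
    · intro g0 hg0 j
      have hsupp0 := hsups g0 hg0
      refine ⟨fun hj => hsupp0.1 j hj, fun hj i => ⟨fun hi => hspan0 _ (hsupp0.2 j hj) i hi, ?_⟩⟩
      by_cases hi : i ∈ s
      · exact Subring.subset_closure ⟨(g0, i, j), ⟨hg0, hi, hj⟩, rfl⟩
      · rw [hspan0 _ (hsupp0.2 j hj) i hi]
        exact zero_mem K₁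
    · intro j
      have h1 : (1 : Amb) (e j) = e j := rfl
      refine ⟨fun _ => h1, fun hj i => ?_⟩
      rw [h1, he]
      simp only [Finsupp.single_apply]
      constructor
      · intro hi
        rw [if_neg fun h : j = i => hi (h ▸ hj)]
      · split_ifs
        · exact one_mem K₁
        · exact zero_mem K₁
    · intro g0 h0 _ _ pg ph j
      constructor
      · intro hj
        rw [hmulapp, (ph j).1 hj, (pg j).1 hj]
      · intro hj i
        have hv : ∀ i' ∉ s, (h0 (e j)) i' = 0 := fun i' hi' => ((ph j).2 hj i').1 hi'
        rw [hmulapp, happ g0 _ hv i]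
        constructor
        · intro hi
          refine Finset.sum_eq_zero fun i' hi' => ?_
          rw [((pg i').2 ((hts i').1 hi') i).1 hi, mul_zero]
        · refine Subring.sum_mem _ fun i' hi' => Subring.mul_mem _ ?_ ?_
          · exact ((ph j).2 hj i').2
          · exact ((pg i').2 ((hts i').1 hi') i).2
  -- the matrix representation
  set n := t.card with hn
  set σ : Fin n ≃ {x // x ∈ t} := t.equivFin.symm with hσ
  have hσs : ∀ k : Fin n, ((σ k : ι) ∈ s) := fun k => (hts _).1 (σ k).2
  set A : ↥G → Matrix (Fin n) (Fin n) ↥K₁ := fun g i j =>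
    ⟨(g.1 (e (σ j : ι))) (σ i : ι), ((hkey g.1 g.2 (σ j : ι)).2 (hσs j) (σ i : ι)).2⟩ with hA
  have hA1 : A 1 = 1 := by
    funext i j
    apply Subtype.ext
    show ((1 : Amb) (e (σ j : ι))) (σ i : ι) = ((1 : Matrix (Fin n) (Fin n) ↥K₁) i j : K)
    rw [Matrix.one_apply]
    have h1 : (1 : Amb) (e (σ j : ι)) = e (σ j : ι) := rfl
    rw [h1, he]
    simp only [Finsupp.single_apply]
    by_cases h : i = j
    · subst h; rw [if_pos rfl, if_pos rfl]; simp
    · have hne : (σ j : ι) ≠ (σ i : ι) := fun hh => h (σ.injective (Subtype.ext hh)).symm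
      rw [if_neg hne, if_neg h]; simp
  have hAmul : ∀ g h : ↥G, A (g * h) = A g * A h := by
    intro g h
    funext i j
    apply Subtype.ext
    have hv : ∀ i' ∉ s, (h.1 (e (σ j : ι))) i' = 0 :=
      fun i' hi' => ((hkey h.1 h.2 (σ j : ι)).2 (hσs j) i').1 hi'
    show ((g * h).1 (e (σ j : ι))) (σ i : ι) = ((A g * A h) i j : K)
    have hl : ((g * h).1 (e (σ j : ι))) (σ i : ι)
        = ∑ i' ∈ t, (h.1 (e (σ j : ι))) i' * (g.1 (e i')) (σ i : ι) := by
      have : (g * h).1 = g.1 * h.1 := rfl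
      rw [this, hmulapp, happ g.1 _ hv (σ i : ι)]
    rw [hl, Matrix.mul_apply]
    push_cast
    rw [← Finset.sum_coe_sort t, ← Equiv.sum_comp σ
      (fun x : {x // x ∈ t} => (h.1 (e (σ j : ι))) (x : ι) * (g.1 (e (x : ι))) (σ i : ι))]
    exact Finset.sum_congr rfl fun k _ => mul_comm _ _
  set ν : ↥G →* (Matrix (Fin n) (Fin n) ↥K₁)ˣ :=
    { toFun := fun g => ⟨A g, A g⁻¹,
        by rw [← hAmul, mul_inv_cancel, hA1], by rw [← hAmul, inv_mul_cancel, hA1]⟩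
      map_one' := Units.ext hA1
      map_mul' := fun g h => Units.ext (hAmul g h) } with hν
  have hνinj : Function.Injective ν := by
    rw [injective_iff_map_eq_one]
    intro g hg
    have hAg : A g = 1 := congrArg Units.val hg
    have hbasis : ∀ j, g.1 (e j) = e j := by
      intro j
      by_cases hj : j ∈ s
      · ext i
        by_cases hi : i ∈ s
        · have hi' : i ∈ t := (hts i).2 hi
          have hj' : j ∈ t := (hts j).2 hj
          set i' := σ.symm ⟨i, hi'⟩ with hi'd
          set j' := σ.symm ⟨j, hj'⟩ with hj'd
          have h1 : (g.1 (e j)) i = (A g i' j' : K) := by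
            rw [hA]
            simp only [hi'd, hj'd, Equiv.apply_symm_apply]
          rw [h1, hAg]
          have h2 : ((1 : Matrix (Fin n) (Fin n) ↥K₁) i' j' : K) = if i' = j' then 1 else 0 := by
            rw [Matrix.one_apply]; split_ifs <;> simp
          rw [h2, he]
          simp only [Finsupp.single_apply]
          have : i' = j' ↔ j = i := by
            rw [hi'd, hj'd]
            constructor
            · intro hh
              have := congrArg (fun x => ((σ.symm.symm x : {x // x ∈ t}) : ι)) hh
              simpa using this.symm
            · intro hh; subst hh; rfl
          by_cases hij : j = i
          · rw [if_pos (this.2 hij), if_pos hij]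
          · rw [if_neg (fun hh => hij (this.1 hh)), if_neg hij]
        · rw [((hkey g.1 g.2 j).2 hj i).1 hi, he]
          simp only [Finsupp.single_apply]
          rw [if_neg fun h : j = i => hi (h ▸ hj)]
      · exact (hkey g.1 g.2 j).1 hj
    apply Subtype.ext
    have hlin : g.1.toLinearMap = (1 : Amb).toLinearMap := by
      apply Finsupp.lhom_ext
      intro a b
      have h1 : (Finsupp.single a b : ι →₀ K) = b • e a := (Finsupp.smul_single_one a b).symm
      rw [h1]
      simp only [LinearEquiv.coe_coe, map_smul]
      rw [hbasis a]
      rfl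
    exact LinearEquiv.toLinearMap_injective hlin
  -- assembling everything
  clear hK₁ hE hA hν
  clear_value K₁
  set Mo := Fin n → ↥K₁ with hMo
  set Q := Mo ⧸ (⊥ : Submodule ↥K₁ Mo) with hQ
  let q : Q ≃ₗ[↥K₁] Mo := Submodule.quotEquivOfEqBot ⊥ rfl
  let matEquiv : (Matrix (Fin n) (Fin n) ↥K₁)ˣ ≃* (Mo →ₗ[↥K₁] Mo)ˣ :=
    Units.mapEquiv (Matrix.toLinAlgEquiv' : Matrix (Fin n) (Fin n) ↥K₁ ≃ₐ[↥K₁] _).toMulEquiv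
  let gl : (Mo →ₗ[↥K₁] Mo)ˣ ≃* (Mo ≃ₗ[↥K₁] Mo) :=
    LinearMap.GeneralLinearGroup.generalLinearEquiv ↥K₁ Mo
  let bigμ : ↥G →* (Q ≃ₗ[↥K₁] Q) :=
    (conjAut q.symm).toMonoidHom.comp (gl.toMonoidHom.comp (matEquiv.toMonoidHom.comp ν))
  have hbig : Function.Injective bigμ :=
    (conjAut q.symm).injective.comp (gl.injective.comp (matEquiv.injective.comp hνinj))
  refine ⟨⊥, inferInstance, ⟨⟨fun a b => ?_⟩⟩, K₁, hNoeth, n, ⊥,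
    bigμ.comp (QuotientGroup.quotientBot (G := ↥G)).toMonoidHom,
    hbig.comp (QuotientGroup.quotientBot (G := ↥G)).injective⟩
  have ha : (a : ↥G) = 1 := Subgroup.mem_bot.1 a.2
  have hb : (b : ↥G) = 1 := Subgroup.mem_bot.1 b.2
  apply Subtype.ext
  show (a : ↥G) * b = (b : ↥G) * a
  rw [ha, hb]
end

section
/- Let K be a ring, ι an index set, and let g be a K-linear automorphism of V = ι →₀ K such that the finite set s ⊆ ι is a support of g. Then s is also a support of the inverse automorphism g⁻¹; that is, g⁻¹(e_j) = e_j for all j ∉ s and g⁻¹(e_j) lies in the K-span of {e_i : i ∈ s} for all j ∈ s. In particular, the inverse of a finitary automorphism is finitary and supp(g⁻¹) = supp(g). -/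
/-- `supp g` is the intersection of all supports of `g` (the smallest support when `g` is
finitary). -/
def supp {K ι : Type*} [Ring K] (g : (ι →₀ K) ≃ₗ[K] (ι →₀ K)) : Set ι :=
  ⋂₀ {s : Set ι | IsSupport g s}

/-- Any support of `g` is a support of `g.symm` (no finiteness needed). -/
theorem isSupport_symm_aux {K ι : Type*} [Ring K]
    (g : (ι →₀ K) ≃ₗ[K] (ι →₀ K)) (s : Set ι) (hs : IsSupport g s) :
    IsSupport g.symm s := by
  classical
  set W : Submodule K (ι →₀ K) := Submodule.span K ((fun i => Finsupp.single i (1 : K)) '' s)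
    with hWdef
  have hW : W = Finsupp.supported K K s := (Finsupp.supported_eq_span_single K s).symm
  -- g fixes anything supported off s
  have hfix' : ∀ x ∈ Submodule.span K ((fun i => Finsupp.single i (1 : K)) '' sᶜ),
      g x = x := by
    intro x hxmem
    induction hxmem using Submodule.span_induction with
    | mem y hy =>
        obtain ⟨i, hi, rfl⟩ := hy
        exact hs.1 i hi
    | zero => simp
    | add a b _ _ ha hb => simp [ha, hb]
    | smul c a _ ha => simp [ha]
  have hfix : ∀ x : ι →₀ K, (∀ i ∈ x.support, i ∉ s) → g x = x := by
    intro x hx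
    have hxmem : x ∈ Finsupp.supported K K sᶜ := fun i hi => hx i hi
    rw [Finsupp.supported_eq_span_single] at hxmem
    exact hfix' x hxmem
  -- g maps W into W
  have hgW : ∀ w ∈ W, g w ∈ W := by
    intro w hw
    have : Submodule.map (g : (ι →₀ K) →ₗ[K] (ι →₀ K)) W ≤ W := by
      rw [hWdef, Submodule.map_span, Submodule.span_le]
      rintro _ ⟨_, ⟨i, hi, rfl⟩, rfl⟩
      exact hs.2 i hi
    exact this ⟨w, hw, rfl⟩
  constructor
  · intro j hj
    have h1 := hs.1 j hj
    have : g.symm (g (Finsupp.single j 1)) = g.symm (Finsupp.single j 1) := by rw [h1]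
    simpa using this.symm
  · intro j hj
    set v := g.symm (Finsupp.single j (1 : K)) with hv
    set vW := v.filter (· ∈ s) with hvWdef
    set vU := v.filter (· ∉ s) with hvUdef
    have hsplit : v = vW + vU := by
      ext i
      by_cases h : i ∈ s <;> simp [hvWdef, hvUdef, Finsupp.filter_apply, h]
    have hvW : vW ∈ W := by
      rw [hW, Finsupp.mem_supported]
      intro i hi
      rw [Finsupp.support_filter] at hi
      exact (Finset.mem_filter.mp hi).2
    have hvU_fix : g vU = vU := by
      apply hfix
      intro i hi
      rw [hvUdef, Finsupp.support_filter] at hi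
      exact (Finset.mem_filter.mp hi).2
    have hgv : g v = Finsupp.single j 1 := by simp [hv]
    have hkey : Finsupp.single j (1 : K) = g vW + vU := by
      rw [← hgv, hsplit, map_add, hvU_fix]
    have hsingle : Finsupp.single j (1 : K) ∈ W := Submodule.subset_span ⟨j, hj, rfl⟩
    have hvU_W : vU ∈ W := by
      have : vU = Finsupp.single j (1 : K) - g vW := by rw [hkey]; abel
      rw [this]
      exact W.sub_mem hsingle (hgW vW hvW)
    have hvU0 : vU = 0 := by
      rw [hW, Finsupp.mem_supported] at hvU_W
      ext i
      by_cases h : i ∈ vU.support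
      · exact absurd (hvU_W h) (by
          rw [hvUdef, Finsupp.support_filter] at h
          exact (Finset.mem_filter.mp h).2)
      · simpa using Finsupp.notMem_support_iff.mp h
    have : v ∈ W := by rw [hsplit, hvU0, add_zero]; exact hvW
    exact this

/-- If the finite set `s` is a support of the automorphism `g`, then `s` is also a support of
the inverse automorphism `g⁻¹ = g.symm`. In particular the inverse of a finitary automorphism
is finitary and `supp (g⁻¹) = supp g`. -/
theorem isSupport_symm
    {K ι : Type*} [Ring K]
    (g : (ι →₀ K) ≃ₗ[K] (ι →₀ K)) (s : Set ι)
    (hfin : s.Finite) (hs : IsSupport g s) :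
    IsSupport g.symm s ∧ IsFinitary g.symm ∧ supp g.symm = supp g := by
  have main := isSupport_symm_aux g s hs
  refine ⟨main, ⟨s, hfin, main⟩, ?_⟩
  have hsets : {t : Set ι | IsSupport g.symm t} = {t : Set ι | IsSupport g t} := by
    ext t
    constructor
    · intro h
      have := isSupport_symm_aux g.symm t h
      rwa [LinearEquiv.symm_symm] at this
    · intro h
      exact isSupport_symm_aux g t h
  unfold supp
  rw [hsets]
end

section
/- Let K be a ring, ι an index set, and g a K-linear automorphism of V = ι →₀ K. The intersection of all subsets of ι that are supports of g is itself a support of g; in particular, every finitary automorphism has a smallest support. -/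
private lemma mem_span_single_iff {K ι : Type*} [Ring K] (s : Set ι) (x : ι →₀ K) :
    x ∈ Submodule.span K ((fun i => Finsupp.single i (1 : K)) '' s) ↔ ↑x.support ⊆ s := by
  rw [← Finsupp.supported_eq_span_single, Finsupp.mem_supported]

/-- The intersection of all supports of a `K`-linear automorphism `g` of `ι →₀ K` is itself a
support of `g`; in particular a finitary automorphism has a smallest support, which is
moreover finite. -/
theorem sInter_isSupport
    {K ι : Type*} [Ring K]
    (g : (ι →₀ K) ≃ₗ[K] (ι →₀ K)) :
    IsSupport g (⋂₀ {s : Set ι | IsSupport g s}) ∧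
      (IsFinitary g →
        ∃ s : Set ι, s.Finite ∧ IsSupport g s ∧ ∀ t : Set ι, IsSupport g t → s ⊆ t) := by
  have hmain : IsSupport g (⋂₀ {s : Set ι | IsSupport g s}) := by
    constructor
    · intro j hj
      rw [Set.mem_sInter] at hj
      push_neg at hj
      obtain ⟨s, hs, hjs⟩ := hj
      exact hs.1 j hjs
    · intro j hj
      rw [Set.mem_sInter] at hj
      rw [mem_span_single_iff]
      intro i hi
      rw [Set.mem_sInter]
      intro s hs
      have := hs.2 j (hj s hs)
      rw [mem_span_single_iff] at this
      exact this hi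
  refine ⟨hmain, ?_⟩
  rintro ⟨s, hsfin, hs⟩
  refine ⟨⋂₀ {s : Set ι | IsSupport g s}, hsfin.subset (Set.sInter_subset_of_mem hs),
    hmain, fun t ht => Set.sInter_subset_of_mem ht⟩
end
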